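/- Let φ be a perfect 2-coloring of Ci_∞(D_n) with positive outer degrees b, c satisfying b + c = 2n + 1. Then the parameter matrix of φ equals ((2n - b, b), (2n - b + 1, b - 1)), i.e., c = 2n + 1 - b and every black vertex has one more white neighbor than every white vertex has. -/

import Mathlib

/-- Neighborhood of `i` in the infinite circulant graph `Ci_∞(D_n)`,
`D_n = {±1, ±3, …, ±(2n-1)}`: the integers at odd distance less than `2n` from `i`. -/
noncomputable def nbrs (n : ℕ) (i : ℤ) : Finset ℤ :=
  (Finset.Icc (i - (2*(n:ℤ) - 1)) (i + (2*(n:ℤ) - 1))).filter (fun j => Odd (j - i))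

/-- `φ` is a perfect 2-coloring of `Ci_∞(D_n)` with outer degrees `(b, c)`:
every vertex of color 0 (black) has exactly `b` neighbors of color 1 (white), and
every vertex of color 1 has exactly `c` neighbors of color 0. -/
def Perfect2 (n : ℕ) (φ : ℤ → Fin 2) (b c : ℕ) : Prop :=
  (∀ i, φ i = 0 → ((nbrs n i).filter (fun j => φ j = 1)).card = b) ∧
  (∀ i, φ i = 1 → ((nbrs n i).filter (fun j => φ j = 0)).card = c)

/-! The parameter matrix of a perfect coloring of a `k`-regular graph has row sums `k`; here
`k = 2n`, so `b + c = 2n + 1` forces `c = 2n + 1 - b` and fixes the diagonal entries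
`2n - b` and `2n - c = b - 1`. -/

lemma nbrs_eq_image_range (n : ℕ) (i : ℤ) :
    nbrs n i = (Finset.range (2*n)).image (fun k : ℕ => i - (2*(n:ℤ) - 1) + 2*k) := by
  ext j
  simp only [nbrs, Finset.mem_filter, Finset.mem_Icc, Finset.mem_image, Finset.mem_range]
  constructor
  · rintro ⟨⟨hlo, hhi⟩, m, hm⟩
    exact ⟨(m + n).toNat, by omega, by omega⟩
  · rintro ⟨k, hk, rfl⟩
    exact ⟨⟨by omega, by omega⟩, (k : ℤ) - n, by ring⟩

lemma card_nbrs (n : ℕ) (i : ℤ) : (nbrs n i).card = 2*n := by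
  rw [nbrs_eq_image_range, Finset.card_image_of_injective _ (fun a b h => by omega),
    Finset.card_range]

lemma Finset.card_filter_eq_zero_add_card_filter_eq_one {α : Type*} (s : Finset α)
    (φ : α → Fin 2) :
    (s.filter (fun j => φ j = 0)).card + (s.filter (fun j => φ j = 1)).card = s.card := by
  have h_one : ∀ j ∈ s, φ j = 1 ↔ ¬ φ j = 0 := fun j _ => by omega
  rw [Finset.filter_congr h_one, Finset.card_filter_add_card_filter_not]

theorem matrix_plus_general (n b c : ℕ)
    (hbc : b + c = 2*n + 1)
    (φ : ℤ → Fin 2) (hφ : Perfect2 n φ b c) :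
    c = 2*n + 1 - b ∧
    (∀ i : ℤ, φ i = 0 → ((nbrs n i).filter (fun j => φ j = 0)).card = 2*n - b) ∧
    (∀ i : ℤ, φ i = 1 → ((nbrs n i).filter (fun j => φ j = 1)).card = b - 1) := by
  obtain ⟨h_black, h_white⟩ := hφ
  have h_rows (i : ℤ) := (nbrs n i).card_filter_eq_zero_add_card_filter_eq_one φ
  simp only [card_nbrs] at h_rows
  refine ⟨by omega, fun i hi => ?_, fun i hi => ?_⟩
  · have := h_rows i; have := h_black i hi; omega
  · have := h_rows i; have := h_white i hi; omega

/-- If `b + c = 2n+1`, the parameter matrix is `((2n-b, b), (2n-b+1, b-1))`. -/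
theorem matrix_plus (n b c : ℕ) (hn : 0 < n) (hb : 0 < b) (hc : 0 < c)
    (hbc : b + c = 2*n + 1)
    (φ : ℤ → Fin 2) (hφ : Perfect2 n φ b c) :
    c = 2*n + 1 - b ∧
    (∀ i : ℤ, φ i = 0 → ((nbrs n i).filter (fun j => φ j = 0)).card = 2*n - b) ∧
    (∀ i : ℤ, φ i = 1 → ((nbrs n i).filter (fun j => φ j = 1)).card = b - 1) :=
  matrix_plus_general n b c hbc φ hφ
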